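/- arXiv:1907.00655 — 2 statements merged into one kernel-verified Lean document; each statement's English description precedes it below -/
import Mathlib

section
/- For matrices A_1,...,A_m ∈ R^{n×n}, a labeled graph G(V,E), and a real p ≥ 1, the limit lim_{k→∞} [Σ_{s∈E_k} ‖A_s‖^p]^{1/(pk)} exists, where the sum ranges over all paths s of length k in G and A_s is the product of matrices along the path. -/
open scoped Classical
open Filter MvPolynomial

/-- The Frobenius norm, a submultiplicative matrix norm. -/
noncomputable def frob {a b : ℕ} (M : Matrix (Fin a) (Fin b) ℝ) : ℝ :=
  Real.sqrt (∑ i, ∑ j, (M i j)^2)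

/-- The set `E_k` of paths of length `k` in the labeled graph with edge set `E ⊆ V × V × L`:
sequences of `k` edges of `E` such that the target of each edge is the source of the next. -/
noncomputable def pathSet {V L : Type*} [Fintype V] [Fintype L]
    (E : Finset (V × V × L)) (k : ℕ) : Finset (Fin k → V × V × L) :=
  Finset.univ.filter (fun s =>
    (∀ i, s i ∈ E) ∧
    ∀ (i : ℕ) (h : i + 1 < k), (s ⟨i, Nat.lt_of_succ_lt h⟩).2.1 = (s ⟨i+1, h⟩).1)

/-- The sequence of labels along a path. -/
def labels {V L : Type*} {k : ℕ} (s : Fin k → V × V × L) : Fin k → L :=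
  fun i => (s i).2.2

/-- The product of matrices along a label sequence: `A_s = A_{σ_k} ⋯ A_{σ_1}`. -/
noncomputable def prodA {n : ℕ} {L : Type*} (A : L → Matrix (Fin n) (Fin n) ℝ)
    {k : ℕ} (σ : Fin k → L) : Matrix (Fin n) (Fin n) ℝ :=
  ((List.ofFn σ).reverse.map A).prod

/-- Maximum of a real-valued function over a (nonempty) finite set. -/
noncomputable def maxOver {α : Type*} (s : Finset α) (f : α → ℝ) : ℝ :=
  sSup (f '' ↑s)

/-- Strong connectivity: every node reaches every node by a path of length ≥ 1. -/
def StronglyConnected {V L : Type*} [Fintype V] [Fintype L]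
    (E : Finset (V × V × L)) : Prop :=
  ∀ u v : V, ∃ k : ℕ, ∃ s ∈ pathSet E (k+1), (s 0).1 = u ∧ (s (Fin.last k)).2.1 = v

/-!
Write `a k = Σ_{s ∈ E_k} ‖A_s‖^p`. Splitting a path of length `k + l` into its first `k` and
last `l` edges, and using `‖A_{s'} A_s‖^p ≤ ‖A_{s'}‖^p ‖A_s‖^p`, gives `a (k + l) ≤ a k * a l`.
If some `a j` vanishes, `a k = 0` for all `k ≥ j`. Otherwise `log ∘ a` is subadditive, so by
Fekete's lemma `log (a k) / k` converges or tends to `-∞`; either way `a k ^ (1 / k)` converges,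
and so does its `p`-th root.
-/

open Set Topology

namespace Subadditive

variable {u : ℕ → ℝ}

theorem tendsto_atBot_of_not_bddBelow (h : Subadditive u)
    (hbdd : ¬BddBelow (range fun n => u n / n)) :
    Tendsto (fun n => u n / n) atTop atBot := by
  refine tendsto_atBot.2 fun b => ?_
  obtain ⟨_, ⟨n, rfl⟩, hn⟩ := not_bddBelow_iff.1 hbdd (min b (-1))
  have hn0 : n ≠ 0 := by
    rintro rfl
    have := min_le_right b (-1)
    simp only [CharP.cast_eq_zero, div_zero] at hn
    linarith
  exact (h.eventually_div_lt_of_div_lt hn0 (hn.trans_le (min_le_left _ _))).mono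
    fun _ => le_of_lt

/-- Without a lower bound on `u n / n`, Fekete's lemma still holds after exponentiating:
`u n / n` then tends to `-∞` and `exp (u n / n)` to `0`. -/
theorem exists_tendsto_exp_div (h : Subadditive u) :
    ∃ L, Tendsto (fun n => Real.exp (u n / n)) atTop (𝓝 L) := by
  by_cases hbdd : BddBelow (range fun n => u n / n)
  · exact ⟨_, (Real.continuous_exp.tendsto _).comp (h.tendsto_lim hbdd)⟩
  · exact ⟨0, Real.tendsto_exp_atBot.comp (h.tendsto_atBot_of_not_bddBelow hbdd)⟩

end Subadditive

theorem exists_tendsto_rpow_one_div_of_submultiplicative {a : ℕ → ℝ} (h0 : ∀ k, 0 ≤ a k)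
    (hmul : ∀ k l, a (k + l) ≤ a k * a l) :
    ∃ L, Tendsto (fun k : ℕ => a k ^ (1 / (k : ℝ))) atTop (𝓝 L) := by
  by_cases hpos : ∀ k, 0 < a k
  · have hlog : Subadditive fun k => Real.log (a k) := fun k l => by
      rw [← Real.log_mul (hpos k).ne' (hpos l).ne']
      exact Real.log_le_log (hpos _) (hmul k l)
    obtain ⟨L, hL⟩ := hlog.exists_tendsto_exp_div
    refine ⟨L, hL.congr fun k => ?_⟩
    rw [Real.rpow_def_of_pos (hpos k), mul_one_div]
  · push Not at hpos
    obtain ⟨j, hj⟩ := hpos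
    have hzero : ∀ k, j ≤ k → a k = 0 := fun k hk => by
      have := hmul j (k - j)
      rw [Nat.add_sub_cancel' hk, le_antisymm hj (h0 j), zero_mul] at this
      exact le_antisymm this (h0 k)
    refine ⟨0, tendsto_const_nhds.congr' ?_⟩
    filter_upwards [eventually_ge_atTop j, eventually_gt_atTop 0] with k hjk hk
    rw [hzero k hjk, Real.zero_rpow (one_div_ne_zero (Nat.cast_ne_zero.2 hk.ne'))]

attribute [local instance] Matrix.frobeniusSeminormedAddCommGroup Matrix.frobeniusNormedRing

lemma frob_eq_norm {a b : ℕ} (M : Matrix (Fin a) (Fin b) ℝ) : frob M = ‖M‖ := by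
  rw [Matrix.frobenius_norm_def, frob, Real.sqrt_eq_rpow]
  congr 1
  refine Finset.sum_congr rfl fun i _ => Finset.sum_congr rfl fun j _ => ?_
  rw [Real.norm_eq_abs, Real.rpow_two, sq_abs]

lemma frob_nonneg {a b : ℕ} (M : Matrix (Fin a) (Fin b) ℝ) : 0 ≤ frob M :=
  Real.sqrt_nonneg _

lemma frob_mul_le {n : ℕ} (M N : Matrix (Fin n) (Fin n) ℝ) :
    frob (M * N) ≤ frob M * frob N := by
  simpa only [frob_eq_norm] using norm_mul_le M N

lemma prodA_append {n : ℕ} {L : Type*} (A : L → Matrix (Fin n) (Fin n) ℝ)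
    {k l : ℕ} (σ : Fin (k + l) → L) :
    prodA A σ =
      prodA A (fun i => σ (Fin.natAdd k i)) * prodA A (fun i => σ (Fin.castAdd l i)) := by
  rw [prodA, List.ofFn_add, List.reverse_append, List.map_append, List.prod_append]
  rfl

section Paths

variable {V L : Type*} [Fintype V] [Fintype L] {E : Finset (V × V × L)}

lemma appendEquiv_symm_mem_pathSet {k l : ℕ} {s : Fin (k + l) → V × V × L}
    (hs : s ∈ pathSet E (k + l)) :
    (Fin.appendEquiv k l).symm s ∈ pathSet E k ×ˢ pathSet E l := by
  simp only [pathSet, Finset.mem_filter, Finset.mem_univ, true_and] at hs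
  obtain ⟨hE, hchain⟩ := hs
  simp only [Finset.mem_product, pathSet, Finset.mem_filter, Finset.mem_univ, true_and,
    Fin.appendEquiv_symm_apply]
  exact ⟨⟨fun i => hE _, fun i h => hchain i (by omega)⟩,
    ⟨fun i => hE _, fun i h => hchain (k + i) (by omega)⟩⟩

lemma sum_pathSet_add_le_mul (w : (k : ℕ) → (Fin k → V × V × L) → ℝ)
    (hw0 : ∀ k s, 0 ≤ w k s) {k l : ℕ}
    (hw : ∀ s, w (k + l) s ≤
      w k ((Fin.appendEquiv k l).symm s).1 * w l ((Fin.appendEquiv k l).symm s).2) :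
    ∑ s ∈ pathSet E (k + l), w (k + l) s ≤
      (∑ s ∈ pathSet E k, w k s) * ∑ t ∈ pathSet E l, w l t := by
  rw [Finset.sum_mul_sum, ← Finset.sum_product']
  calc ∑ s ∈ pathSet E (k + l), w (k + l) s
      ≤ ∑ s ∈ pathSet E (k + l), w k ((Fin.appendEquiv k l).symm s).1 *
          w l ((Fin.appendEquiv k l).symm s).2 := Finset.sum_le_sum fun s _ => hw s
    _ = ∑ st ∈ (pathSet E (k + l)).map (Fin.appendEquiv k l).symm.toEmbedding,
          w k st.1 * w l st.2 := by
      rw [Finset.sum_map, Equiv.coe_toEmbedding]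
    _ ≤ ∑ st ∈ pathSet E k ×ˢ pathSet E l, w k st.1 * w l st.2 := by
      refine Finset.sum_le_sum_of_subset_of_nonneg ?_ fun st _ _ => mul_nonneg (hw0 _ _) (hw0 _ _)
      intro st hst
      obtain ⟨s, hs, rfl⟩ := Finset.mem_map.1 hst
      exact appendEquiv_symm_mem_pathSet hs

end Paths

noncomputable def pathNormSum {m n : ℕ} (A : Fin m → Matrix (Fin n) (Fin n) ℝ)
    {V : Type*} [Fintype V] (E : Finset (V × V × Fin m)) (p : ℝ) (k : ℕ) : ℝ :=
  ∑ s ∈ pathSet E k, frob (prodA A (labels s)) ^ p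

section PathNormSum

variable {m n : ℕ} (A : Fin m → Matrix (Fin n) (Fin n) ℝ) {V : Type*} [Fintype V]
  (E : Finset (V × V × Fin m)) {p : ℝ}

lemma pathNormSum_nonneg (k : ℕ) : 0 ≤ pathNormSum A E p k :=
  Finset.sum_nonneg fun _ _ => Real.rpow_nonneg (frob_nonneg _) _

lemma pathNormSum_add_le (hp : 0 ≤ p) (k l : ℕ) :
    pathNormSum A E p (k + l) ≤ pathNormSum A E p k * pathNormSum A E p l := by
  refine sum_pathSet_add_le_mul (fun _ s => frob (prodA A (labels s)) ^ p)
    (fun _ _ => Real.rpow_nonneg (frob_nonneg _) _) fun s => ?_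
  rw [mul_comm, ← Real.mul_rpow (frob_nonneg _) (frob_nonneg _)]
  exact Real.rpow_le_rpow (frob_nonneg _)
    ((congrArg frob (prodA_append A _)).trans_le (frob_mul_le _ _)) hp

end PathNormSum

/-- for matrices `A_1,…,A_m`, a labeled graph `G(V,E)` and a real `p ≥ 1`,
the limit `lim_{k→∞} [Σ_{s∈E_k} ‖A_s‖^p]^{1/(pk)}` exists. -/
theorem sum_p_radius_limit_exists {m n : ℕ} (A : Fin m → Matrix (Fin n) (Fin n) ℝ)
    {V : Type*} [Fintype V] (E : Finset (V × V × Fin m)) (p : ℝ) (hp : 1 ≤ p) :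
    ∃ L : ℝ, Tendsto
      (fun k : ℕ =>
        (∑ s ∈ pathSet E k, frob (prodA A (labels s)) ^ p) ^ (1 / (p * k)))
      atTop (nhds L) := by
  have hp0 : 0 ≤ p := zero_le_one.trans hp
  obtain ⟨L, hL⟩ := exists_tendsto_rpow_one_div_of_submultiplicative (pathNormSum_nonneg A E)
    (pathNormSum_add_le A E hp0)
  refine ⟨L ^ (1 / p), (hL.rpow_const (Or.inr (one_div_nonneg.2 hp0))).congr fun k => ?_⟩
  rw [← Real.rpow_mul (pathNormSum_nonneg A E k), one_div_mul_one_div, mul_comm, pathNormSum]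
end

section
/- Suppose for each node v of G there is a strictly positive continuous function p_v: R^n → R homogeneous of degree 2d, and γ̄ > 0 with p_v(A_σ x) ≤ γ̄^{2d} p_u(x) for all edges (u,v,σ). Then for every path s of length k with labels (σ_1,...,σ_k) from node u_0 to node u_k and every x, p_{u_k}(A_s x) ≤ γ̄^{2dk} p_{u_0}(x), and consequently ‖A_s‖ ≤ C γ̄^k for a constant C independent of k and s. -/
open scoped Classical
open Filter MvPolynomial

/-- The operator norm of a matrix induced by the Euclidean norm. -/
noncomputable def euclOpNorm {n : ℕ} (M : Matrix (Fin n) (Fin n) ℝ) : ℝ :=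
  ‖LinearMap.toContinuousLinearMap (Matrix.toEuclideanLin M)‖

/-!
Along a path the Lyapunov inequalities telescope. By homogeneity and compactness of the unit
sphere, `c ‖x‖^{2d} ≤ p_v(x) ≤ B ‖x‖^{2d}` with `c > 0`, uniformly over the finitely many nodes.
Hence `c ‖A_s x‖^{2d} ≤ γ̄^{2dk} B ‖x‖^{2d}`, and taking `2d`-th roots gives
`‖A_s‖ ≤ (B/c)^{1/2d} γ̄^k`.
-/

lemma prodA_one {n : ℕ} {L : Type*} (A : L → Matrix (Fin n) (Fin n) ℝ) (σ : Fin 1 → L) :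
    prodA A σ = A (σ 0) := by
  simp [prodA, List.ofFn_succ]

lemma prodA_succ {n k : ℕ} {L : Type*} (A : L → Matrix (Fin n) (Fin n) ℝ)
    (σ : Fin (k + 1) → L) : prodA A σ = A (σ (Fin.last k)) * prodA A (Fin.init σ) := by
  unfold prodA
  rw [List.ofFn_succ']
  simp [Fin.init_def]

section Paths

variable {V L : Type*} [Fintype V] [Fintype L] {E : Finset (V × V × L)} {k : ℕ}

lemma apply_mem_of_mem_pathSet {s : Fin k → V × V × L} (hs : s ∈ pathSet E k) (i : Fin k) :
    s i ∈ E :=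
  (Finset.mem_filter.1 hs).2.1 i

lemma init_mem_pathSet {s : Fin (k + 2) → V × V × L} (hs : s ∈ pathSet E (k + 2)) :
    Fin.init s ∈ pathSet E (k + 1) := by
  simp only [pathSet, Finset.mem_filter, Finset.mem_univ, true_and] at hs ⊢
  exact ⟨fun i => hs.1 _, fun i h => hs.2 i (by omega)⟩

lemma init_last_target_eq_of_mem_pathSet {s : Fin (k + 2) → V × V × L}
    (hs : s ∈ pathSet E (k + 2)) : (Fin.init s (Fin.last k)).2.1 = (s (Fin.last (k + 1))).1 :=
  (Finset.mem_filter.1 hs).2.2 k (by omega)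

theorem apply_prodA_le_pow_mul {n : ℕ} {A : L → Matrix (Fin n) (Fin n) ℝ}
    {P : V → (Fin n → ℝ) → ℝ} {ρ : ℝ} (hρ : 0 ≤ ρ)
    (hlyap : ∀ e ∈ E, ∀ x, P e.2.1 ((A e.2.2).mulVec x) ≤ ρ * P e.1 x) :
    ∀ {k : ℕ}, ∀ s ∈ pathSet E (k + 1), ∀ x,
      P (s (Fin.last k)).2.1 ((prodA A (labels s)).mulVec x) ≤ ρ ^ (k + 1) * P (s 0).1 x
  | 0, s, hs, x => by
    simpa [prodA_one, labels] using hlyap _ (apply_mem_of_mem_pathSet hs 0) x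
  | k + 1, s, hs, x => by
    have ih := apply_prodA_le_pow_mul hρ hlyap (Fin.init s) (init_mem_pathSet hs) x
    rw [init_last_target_eq_of_mem_pathSet hs] at ih
    rw [prodA_succ, ← Matrix.mulVec_mulVec]
    calc _ ≤ ρ * P (s (Fin.last (k + 1))).1 ((prodA A (Fin.init (labels s))).mulVec x) :=
          hlyap _ (apply_mem_of_mem_pathSet hs _) _
      _ ≤ ρ * (ρ ^ (k + 1) * P (s 0).1 x) := mul_le_mul_of_nonneg_left ih hρ
      _ = ρ ^ (k + 2) * P (s 0).1 x := by ring

end Paths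

section Homogeneous

open Metric

variable {E : Type*} [NormedAddCommGroup E] [NormedSpace ℝ E] {p : E → ℝ} {k : ℕ}

lemma apply_zero_of_homogeneous (hk : k ≠ 0) (hp : ∀ (t : ℝ) x, p (t • x) = t ^ k * p x) :
    p 0 = 0 := by
  simpa [zero_pow hk] using hp 0 0

lemma homogeneous_eq_norm_pow_mul (hp : ∀ (t : ℝ) x, p (t • x) = t ^ k * p x) {x : E}
    (hx : x ≠ 0) : p x = ‖x‖ ^ k * p (‖x‖⁻¹ • x) := by
  rw [← hp, smul_smul, mul_inv_cancel₀ (norm_ne_zero_iff.2 hx), one_smul]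

lemma inv_norm_smul_mem_sphere {x : E} (hx : x ≠ 0) : ‖x‖⁻¹ • x ∈ sphere (0 : E) 1 := by
  simp [norm_smul, hx]

lemma mul_norm_pow_le_of_forall_sphere (hk : k ≠ 0) (hp : ∀ (t : ℝ) x, p (t • x) = t ^ k * p x)
    {a : ℝ} (ha : ∀ u ∈ sphere (0 : E) 1, a ≤ p u) (x : E) : a * ‖x‖ ^ k ≤ p x := by
  rcases eq_or_ne x 0 with rfl | hx
  · simp [apply_zero_of_homogeneous hk hp, zero_pow hk]
  · rw [homogeneous_eq_norm_pow_mul hp hx, mul_comm]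
    gcongr
    exact ha _ (inv_norm_smul_mem_sphere hx)

lemma le_mul_norm_pow_of_forall_sphere (hk : k ≠ 0) (hp : ∀ (t : ℝ) x, p (t • x) = t ^ k * p x)
    {b : ℝ} (hb : ∀ u ∈ sphere (0 : E) 1, p u ≤ b) (x : E) : p x ≤ b * ‖x‖ ^ k := by
  rcases eq_or_ne x 0 with rfl | hx
  · simp [apply_zero_of_homogeneous hk hp, zero_pow hk]
  · rw [homogeneous_eq_norm_pow_mul hp hx, mul_comm b]
    gcongr
    exact hb _ (inv_norm_smul_mem_sphere hx)

end Homogeneous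

section HomogeneousFamily

open Metric

variable {E ι : Type*} [NormedAddCommGroup E] [NormedSpace ℝ E] [FiniteDimensional ℝ E]
  [Finite ι] {p : ι → E → ℝ} {k : ℕ}

lemma isCompact_iUnion_image_sphere (hp : ∀ i, Continuous (p i)) :
    IsCompact (⋃ i, p i '' sphere (0 : E) 1) :=
  isCompact_iUnion fun i => (isCompact_sphere 0 1).image (hp i)

theorem exists_pos_forall_mul_norm_pow_le (hk : k ≠ 0) (hcont : ∀ i, Continuous (p i))
    (hhom : ∀ i (t : ℝ) x, p i (t • x) = t ^ k * p i x) (hpos : ∀ i x, x ≠ 0 → 0 < p i x) :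
    ∃ c > 0, ∀ i x, c * ‖x‖ ^ k ≤ p i x := by
  obtain ⟨c, hc, hcK⟩ := (isCompact_iUnion_image_sphere hcont).exists_forall_le'
    continuousOn_id (a := 0) (by
      simp only [Set.mem_iUnion, Set.mem_image]
      rintro _ ⟨i, u, hu, rfl⟩
      exact hpos i u (ne_of_mem_sphere hu one_ne_zero))
  refine ⟨c, hc, fun i => mul_norm_pow_le_of_forall_sphere hk (hhom i) fun u hu => ?_⟩
  exact hcK _ (Set.mem_iUnion.2 ⟨i, u, hu, rfl⟩)

theorem exists_nonneg_forall_le_mul_norm_pow (hk : k ≠ 0) (hcont : ∀ i, Continuous (p i))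
    (hhom : ∀ i (t : ℝ) x, p i (t • x) = t ^ k * p i x) :
    ∃ B ≥ 0, ∀ i x, p i x ≤ B * ‖x‖ ^ k := by
  obtain ⟨B, hB⟩ := (isCompact_iUnion_image_sphere hcont).bddAbove
  refine ⟨max B 0, le_max_right _ _, fun i =>
    le_mul_norm_pow_of_forall_sphere hk (hhom i) fun u hu => ?_⟩
  exact (hB (Set.mem_iUnion.2 ⟨i, u, hu, rfl⟩)).trans (le_max_left _ _)

end HomogeneousFamily

lemma euclOpNorm_le_of_pow_le {n k : ℕ} {M : Matrix (Fin n) (Fin n) ℝ} {C : ℝ} (hk : k ≠ 0)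
    (hC : 0 ≤ C) (h : ∀ x : EuclideanSpace ℝ (Fin n), ‖M.toEuclideanLin x‖ ^ k ≤ (C * ‖x‖) ^ k) :
    euclOpNorm M ≤ C :=
  ContinuousLinearMap.opNorm_le_bound _ hC fun x =>
    (pow_le_pow_iff_left₀ (norm_nonneg _) (by positivity) hk).1 (h x)

/-- if strictly positive continuous functions `p_v`, homogeneous of degree
`2d`, satisfy `p_v(A_σ x) ≤ γ̄^{2d} p_u(x)` for all edges `(u,v,σ)`, then for every path
`s` of length `k ≥ 1` from `u₀` to `u_k` and every `x`, `p_{u_k}(A_s x) ≤ γ̄^{2dk} p_{u₀}(x)`,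
and consequently `‖A_s‖ ≤ C γ̄^k` for a constant `C` independent of `k` and `s`. -/
theorem lyapunov_along_paths {m n : ℕ} (A : Fin m → Matrix (Fin n) (Fin n) ℝ)
    {V : Type*} [Fintype V] (E : Finset (V × V × Fin m))
    (d : ℕ) (hd : 0 < d) (P : V → (Fin n → ℝ) → ℝ)
    (hcont : ∀ v, Continuous (P v))
    (hhom : ∀ v (lam : ℝ) (x : Fin n → ℝ), P v (lam • x) = lam ^ (2 * d) * P v x)
    (hpos : ∀ v (x : Fin n → ℝ), x ≠ 0 → 0 < P v x)
    (γ : ℝ) (hγ : 0 < γ)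
    (hlyap : ∀ e ∈ E, ∀ x : Fin n → ℝ,
      P e.2.1 ((A e.2.2).mulVec x) ≤ γ ^ (2 * d) * P e.1 x) :
    (∀ (k : ℕ), ∀ s ∈ pathSet E (k+1), ∀ x : Fin n → ℝ,
      P ((s (Fin.last k)).2.1) ((prodA A (labels s)).mulVec x)
        ≤ γ ^ (2 * d * (k+1)) * P ((s 0).1) x) ∧
    ∃ C : ℝ, ∀ (k : ℕ), ∀ s ∈ pathSet E (k+1),
      euclOpNorm (prodA A (labels s)) ≤ C * γ ^ (k+1) := by
  have hk : 2 * d ≠ 0 := by positivity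
  have hpath : ∀ (k : ℕ), ∀ s ∈ pathSet E (k + 1), ∀ x : Fin n → ℝ,
      P ((s (Fin.last k)).2.1) ((prodA A (labels s)).mulVec x)
        ≤ γ ^ (2 * d * (k + 1)) * P ((s 0).1) x := fun k s hs x => by
    simpa only [pow_mul] using apply_prodA_le_pow_mul (by positivity) hlyap s hs x
  refine ⟨hpath, ?_⟩
  set p : V → EuclideanSpace ℝ (Fin n) → ℝ := fun v y => P v y.ofLp
  have hpcont : ∀ v, Continuous (p v) := fun v => (hcont v).comp (PiLp.continuous_ofLp 2 _)
  have hphom : ∀ v (t : ℝ) y, p v (t • y) = t ^ (2 * d) * p v y := fun v t y => hhom v t y.ofLp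
  obtain ⟨c, hc, hcp⟩ := exists_pos_forall_mul_norm_pow_le hk hpcont hphom
    fun v y hy => hpos v y.ofLp (by simpa using hy)
  obtain ⟨B, hB, hpB⟩ := exists_nonneg_forall_le_mul_norm_pow hk hpcont hphom
  set C := (B / c) ^ ((↑(2 * d) : ℝ)⁻¹)
  have hCpow : C ^ (2 * d) = B / c := Real.rpow_inv_natCast_pow (by positivity) hk
  refine ⟨C, fun k s hs => euclOpNorm_le_of_pow_le hk (by positivity) fun x => ?_⟩
  have hcB : c * ‖(prodA A (labels s)).toEuclideanLin x‖ ^ (2 * d)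
      ≤ γ ^ (2 * d * (k + 1)) * (B * ‖x‖ ^ (2 * d)) :=
    calc _ ≤ P ((s (Fin.last k)).2.1) ((prodA A (labels s)).mulVec x.ofLp) := hcp _ _
      _ ≤ γ ^ (2 * d * (k + 1)) * P ((s 0).1) x.ofLp := hpath k s hs _
      _ ≤ γ ^ (2 * d * (k + 1)) * (B * ‖x‖ ^ (2 * d)) := by gcongr; exact hpB _ _
  rw [mul_pow, mul_pow, hCpow, ← pow_mul, mul_comm (k + 1), div_mul_eq_mul_div,
    div_mul_eq_mul_div, le_div_iff₀ hc]
  linarith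
end
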